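/- Let β ≠ 0 and suppose f : ℝ → ℝ smooth satisfies f'' = β·f. Define recursively in R = C^∞(ℝ)[u_0, u_1, ...]: P¹ = u_0; φ^i and θ^{l,m} and P^{i+1} as follows: θ^{l,m} = P^l·P^{m+1} - e_{-1}(P^l)·e_{-1}(P^m) + (β/4)·φ^l·φ^m; φ^{2l-1} = (P^l)² + 2Σ_{j=1}^{l-1} θ^{j,2l-1-j}; φ^{2l} = P^{l+1}P^l + θ^{l,l} + 2Σ_{j=1}^{l-1} θ^{j,2l-j}; P^{i+1} = e_{-1}e_{-1}P^i - (β/2)u_0·φ^i. Then for all i ≥ 1: e_{-1}(φ^i) = 2u_0·e_{-1}(P^i), e_{-̄1}(φ^i) = -2f·P^i, and e_{-̄1}e_{-1}P^i = -f'·P^i. -/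

import Mathlib

open MvPolynomial
open scoped ContDiff

/-- The coefficient ring C^∞-functions of u (modelled as all functions ℝ → ℝ,
with the relevant functions required smooth in the hypotheses). -/
abbrev SF : Type := ℝ → ℝ

/-- The ring R = C^∞(ℝ)[u₀, u₁, u₂, ...]: polynomials in the formal variables
u_j (j : ℕ) with function coefficients. -/
abbrev RR : Type := MvPolynomial ℕ SF

/-- The operator ∂/∂u, differentiating the coefficient functions. -/
noncomputable def du (p : RR) : RR :=
  ∑ m ∈ p.support, monomial m (deriv (MvPolynomial.coeff m p))

/-- The total derivative e₋₁ = u₀·∂/∂u + Σ_i u_{i+1}·∂/∂u_i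
(a finite sum on any polynomial). -/
noncomputable def eneg1 (p : RR) : RR :=
  X 0 * du p + ∑ i ∈ p.vars, X (i + 1) * pderiv i p

/-- T^j = (e₋₁)^j f. -/
noncomputable def Tf (f : SF) (j : ℕ) : RR := eneg1^[j] (MvPolynomial.C f)

/-- The recursively defined T^i: T⁰ = f, T^{i+1} = Σ_{j=0}^{i} C(i,j)·u_{i-j}·(T^j)_u. -/
noncomputable def Trec (f : SF) : ℕ → RR
  | 0 => MvPolynomial.C f
  | (i + 1) => ∑ j ∈ (Finset.range (i + 1)).attach,
      (Nat.choose i j.1 : RR) * (X (i - j.1) * du (Trec f j.1))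
  decreasing_by exact Finset.mem_range.mp j.2

/-- The operator Σ_{j≥0} T^j·∂/∂u_j = f·∂/∂u₀ + Σ_{j≥1} T^j·∂/∂u_j
(equal to -e_{-̄1} on polynomials in the u_j). -/
noncomputable def Ebar (f : SF) (p : RR) : RR :=
  ∑ j ∈ p.vars, Tf f j * pderiv j p

/-- Inclusion of ℝ[u₀, u₁, ...] (constant coefficients) into R. -/
noncomputable def constLift : MvPolynomial ℕ ℝ →+* RR :=
  MvPolynomial.map (algebraMap ℝ SF)

/-- Weighted degree of a monomial, determined by wd(u_j) = j + 1. -/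
def wdeg (m : ℕ →₀ ℕ) : ℕ := m.sum fun j e => e * (j + 1)

/-- The constant polynomial with constant value r. -/
noncomputable def Cc (r : ℝ) : RR := MvPolynomial.C (fun _ : ℝ => r)

-- ---------- du basics ----------

lemma deriv_zero_fun : deriv (0 : SF) = 0 := by
  funext x
  have : (0 : SF) = fun _ => (0:ℝ) := rfl
  rw [this, deriv_const]


lemma coeff_du (p : RR) (m : ℕ →₀ ℕ) : coeff m (du p) = deriv (coeff m p) := by
  classical
  rw [du, coeff_sum]
  simp only [coeff_monomial]
  rw [Finset.sum_ite_eq' p.support m (fun m => deriv (coeff m p))]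
  split_ifs with h
  · rfl
  · rw [notMem_support_iff.mp h, deriv_zero_fun]

lemma du_C (g : SF) : du (MvPolynomial.C g) = MvPolynomial.C (deriv g) := by
  apply MvPolynomial.ext
  intro m
  rw [coeff_du]
  classical
  simp only [coeff_C]
  split_ifs with h
  · rfl
  · exact deriv_zero_fun

-- ---------- smoothness predicate ----------

def Sm (p : RR) : Prop := ∀ m, ContDiff ℝ ∞ (coeff m p)

lemma Sm.add {p q : RR} (hp : Sm p) (hq : Sm q) : Sm (p + q) := by
  intro m; rw [coeff_add]; exact (hp m).add (hq m)

lemma Sm.neg {p : RR} (hp : Sm p) : Sm (-p) := by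
  intro m; rw [coeff_neg]; exact (hp m).neg

lemma Sm.sub {p q : RR} (hp : Sm p) (hq : Sm q) : Sm (p - q) := by
  rw [sub_eq_add_neg]; exact hp.add hq.neg

lemma Sm.mul {p q : RR} (hp : Sm p) (hq : Sm q) : Sm (p * q) := by
  classical
  intro m
  rw [coeff_mul]
  have : (∑ x ∈ Finset.HasAntidiagonal.antidiagonal m, coeff x.1 p * coeff x.2 q)
      = fun t => ∑ x ∈ Finset.HasAntidiagonal.antidiagonal m, coeff x.1 p t * coeff x.2 q t := by
    funext t; simp [Finset.sum_apply]
  rw [this]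
  exact ContDiff.sum fun x _ => (hp x.1).mul (hq x.2)

lemma Sm_C {g : SF} (hg : ContDiff ℝ ∞ g) : Sm (MvPolynomial.C g) := by
  intro m
  classical
  rw [coeff_C]
  split_ifs
  · exact hg
  · exact contDiff_const

lemma Sm_zero : Sm (0 : RR) := by
  intro m; rw [coeff_zero]; exact contDiff_const

lemma Sm_sum {ι : Type*} {s : Finset ι} {g : ι → RR} (h : ∀ i ∈ s, Sm (g i)) :
    Sm (∑ i ∈ s, g i) := by
  classical
  induction s using Finset.cons_induction with
  | empty => simpa using Sm_zero
  | cons a s ha ih =>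
      rw [Finset.sum_cons]
      exact (h a (Finset.mem_cons_self a s)).add
        (ih fun i hi => h i (Finset.mem_cons_of_mem hi))

lemma Sm_monomial {m : ℕ →₀ ℕ} {g : SF} (hg : ContDiff ℝ ∞ g) : Sm (monomial m g) := by
  intro m'
  classical
  rw [coeff_monomial]
  split_ifs
  · exact hg
  · exact contDiff_const

lemma Sm.du {p : RR} (hp : Sm p) : Sm (du p) := by
  intro m
  rw [coeff_du]
  exact (contDiff_infty_iff_deriv.mp (hp m)).2

lemma Sm.pderiv {p : RR} (hp : Sm p) (i : ℕ) : Sm (MvPolynomial.pderiv i p) := by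
  classical
  conv => rw [as_sum p]
  rw [map_sum]
  apply Sm_sum
  intro m _
  rw [pderiv_monomial]
  exact Sm_monomial ((hp m).mul contDiff_const)

-- ---------- derivative helpers on SF ----------

lemma SFderiv_add {g h : SF} (hg : ContDiff ℝ ∞ g) (hh : ContDiff ℝ ∞ h) :
    deriv (g + h) = deriv g + deriv h := by
  funext x
  have : g + h = fun t => g t + h t := rfl
  rw [deriv_add ((hg.differentiable (by simp)).differentiableAt)
    ((hh.differentiable (by simp)).differentiableAt)]
  rfl

lemma SFderiv_mul {g h : SF} (hg : ContDiff ℝ ∞ g) (hh : ContDiff ℝ ∞ h) :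
    deriv (g * h) = deriv g * h + g * deriv h := by
  funext x
  have : g * h = fun t => g t * h t := rfl
  rw [deriv_mul ((hg.differentiable (by simp)).differentiableAt)
    ((hh.differentiable (by simp)).differentiableAt)]
  rfl

lemma du_add {p q : RR} (hp : Sm p) (hq : Sm q) : du (p + q) = du p + du q := by
  apply MvPolynomial.ext
  intro m
  rw [coeff_add, coeff_du, coeff_du, coeff_du, coeff_add, SFderiv_add (hp m) (hq m)]

lemma SFsm_sum {ι : Type*} {s : Finset ι} {g : ι → SF}
    (h : ∀ i ∈ s, ContDiff ℝ ∞ (g i)) : ContDiff ℝ ∞ (∑ i ∈ s, g i) := by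
  have : (∑ i ∈ s, g i) = fun t => ∑ i ∈ s, g i t := by
    funext t; simp [Finset.sum_apply]
  rw [this]
  exact ContDiff.sum fun i hi => h i hi

lemma SFderiv_sum {ι : Type*} {s : Finset ι} {g : ι → SF}
    (h : ∀ i ∈ s, ContDiff ℝ ∞ (g i)) :
    deriv (∑ i ∈ s, g i) = ∑ i ∈ s, deriv (g i) := by
  classical
  induction s using Finset.cons_induction with
  | empty => simpa using deriv_zero_fun
  | cons a s ha ih =>
      rw [Finset.sum_cons, Finset.sum_cons,
        SFderiv_add (h a (Finset.mem_cons_self a s))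
          (SFsm_sum fun i hi => h i (Finset.mem_cons_of_mem hi)),
        ih fun i hi => h i (Finset.mem_cons_of_mem hi)]

lemma du_mul {p q : RR} (hp : Sm p) (hq : Sm q) : du (p * q) = du p * q + p * du q := by
  classical
  apply MvPolynomial.ext
  intro m
  rw [coeff_add, coeff_du, coeff_mul, coeff_mul, coeff_mul,
    SFderiv_sum fun x _ => ((hp x.1).mul (hq x.2)), ← Finset.sum_add_distrib]
  apply Finset.sum_congr rfl
  intro x _
  rw [coeff_du, coeff_du, SFderiv_mul (hp x.1) (hq x.2)]

-- ---------- generic first-order differential operator ----------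

noncomputable def Dgen (c : ℕ → RR) (p : RR) : RR := ∑ i ∈ p.vars, c i * pderiv i p

lemma Dgen_eq_sum {c : ℕ → RR} {p : RR} {s : Finset ℕ} (h : p.vars ⊆ s) :
    Dgen c p = ∑ i ∈ s, c i * pderiv i p := by
  rw [Dgen]
  apply Finset.sum_subset h
  intro i _ hi
  rw [pderiv_eq_zero_of_notMem_vars hi, mul_zero]

lemma Dgen_add (c : ℕ → RR) (p q : RR) : Dgen c (p + q) = Dgen c p + Dgen c q := by
  classical
  rw [Dgen_eq_sum (s := p.vars ∪ q.vars ∪ (p+q).vars) (by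
      exact Finset.Subset.trans (vars_add_subset p q) (Finset.subset_union_left)),
    Dgen_eq_sum (s := p.vars ∪ q.vars ∪ (p+q).vars) (by
      exact Finset.Subset.trans Finset.subset_union_left Finset.subset_union_left),
    Dgen_eq_sum (s := p.vars ∪ q.vars ∪ (p+q).vars) (by
      exact Finset.Subset.trans Finset.subset_union_right Finset.subset_union_left),
    ← Finset.sum_add_distrib]
  apply Finset.sum_congr rfl
  intro i _
  rw [map_add, mul_add]

lemma Dgen_mul (c : ℕ → RR) (p q : RR) : Dgen c (p * q) = Dgen c p * q + p * Dgen c q := by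
  classical
  rw [Dgen_eq_sum (s := p.vars ∪ q.vars ∪ (p*q).vars) (by
      exact Finset.Subset.trans (vars_mul p q) (Finset.subset_union_left)),
    Dgen_eq_sum (s := p.vars ∪ q.vars ∪ (p*q).vars) (by
      exact Finset.Subset.trans Finset.subset_union_left Finset.subset_union_left),
    Dgen_eq_sum (s := p.vars ∪ q.vars ∪ (p*q).vars) (by
      exact Finset.Subset.trans Finset.subset_union_right Finset.subset_union_left),
    Finset.sum_mul, Finset.mul_sum, ← Finset.sum_add_distrib]
  apply Finset.sum_congr rfl
  intro i _
  rw [pderiv_mul, mul_add]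
  ring

lemma Dgen_C (c : ℕ → RR) (g : SF) : Dgen c (MvPolynomial.C g) = 0 := by
  rw [Dgen, vars_C, Finset.sum_empty]

lemma Dgen_X (c : ℕ → RR) (j : ℕ) : Dgen c (X j) = c j := by
  rw [Dgen, vars_X, Finset.sum_singleton, pderiv_X_self, mul_one]

lemma Dgen_sum (c : ℕ → RR) {ι : Type*} (s : Finset ι) (g : ι → RR) :
    Dgen c (∑ i ∈ s, g i) = ∑ i ∈ s, Dgen c (g i) := by
  classical
  induction s using Finset.cons_induction with
  | empty => simp [Dgen]
  | cons a s ha ih => rw [Finset.sum_cons, Finset.sum_cons, Dgen_add, ih]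

lemma Dgen_neg (c : ℕ → RR) (p : RR) : Dgen c (-p) = -Dgen c p := by
  have h := Dgen_add c p (-p)
  rw [add_neg_cancel] at h
  have h0 : Dgen c 0 = 0 := by simp [Dgen]
  rw [h0] at h
  linear_combination -h

lemma Dgen_sub (c : ℕ → RR) (p q : RR) : Dgen c (p - q) = Dgen c p - Dgen c q := by
  rw [sub_eq_add_neg, Dgen_add, Dgen_neg, sub_eq_add_neg]

-- ---------- eneg1 and Ebar via Dgen ----------

lemma eneg1_def (p : RR) : eneg1 p = X 0 * du p + Dgen (fun i => X (i+1)) p := rfl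

lemma Ebar_def (f : SF) (p : RR) : Ebar f p = Dgen (Tf f) p := rfl

lemma du_neg {p : RR} (hp : Sm p) : du (-p) = -du p := by
  apply MvPolynomial.ext
  intro m
  rw [coeff_neg, coeff_du, coeff_du, coeff_neg]
  funext x
  have : -coeff m p = fun t => -(coeff m p t) := rfl
  rw [deriv.neg]
  rfl

lemma eneg1_add {p q : RR} (hp : Sm p) (hq : Sm q) : eneg1 (p+q) = eneg1 p + eneg1 q := by
  rw [eneg1_def, eneg1_def, eneg1_def, du_add hp hq, Dgen_add]
  ring

lemma eneg1_mul {p q : RR} (hp : Sm p) (hq : Sm q) :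
    eneg1 (p*q) = eneg1 p * q + p * eneg1 q := by
  rw [eneg1_def, eneg1_def, eneg1_def, du_mul hp hq, Dgen_mul]
  ring

lemma eneg1_neg {p : RR} (hp : Sm p) : eneg1 (-p) = -eneg1 p := by
  rw [eneg1_def, eneg1_def, du_neg hp, Dgen_neg]
  ring

lemma eneg1_sub {p q : RR} (hp : Sm p) (hq : Sm q) : eneg1 (p-q) = eneg1 p - eneg1 q := by
  rw [sub_eq_add_neg, eneg1_add hp hq.neg, eneg1_neg hq, sub_eq_add_neg]

lemma eneg1_C (g : SF) : eneg1 (MvPolynomial.C g) = X 0 * MvPolynomial.C (deriv g) := by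
  rw [eneg1_def, du_C, Dgen_C, add_zero]

lemma du_X (j : ℕ) : du (X j : RR) = 0 := by
  apply MvPolynomial.ext
  intro m
  rw [coeff_du, coeff_zero]
  classical
  rw [MvPolynomial.coeff_X']
  split_ifs
  · exact funext fun x => deriv_const x 1
  · exact deriv_zero_fun

lemma eneg1_X (j : ℕ) : eneg1 (X j : RR) = X (j+1) := by
  rw [eneg1_def, du_X, mul_zero, zero_add, Dgen_X]

lemma Ebar_add (f : SF) (p q : RR) : Ebar f (p+q) = Ebar f p + Ebar f q := Dgen_add _ p q

lemma Ebar_mul (f : SF) (p q : RR) : Ebar f (p*q) = Ebar f p * q + p * Ebar f q :=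
  Dgen_mul _ p q

lemma Ebar_neg (f : SF) (p : RR) : Ebar f (-p) = -Ebar f p := Dgen_neg _ p

lemma Ebar_sub (f : SF) (p q : RR) : Ebar f (p-q) = Ebar f p - Ebar f q := Dgen_sub _ p q

lemma Ebar_sum (f : SF) {ι : Type*} (s : Finset ι) (g : ι → RR) :
    Ebar f (∑ i ∈ s, g i) = ∑ i ∈ s, Ebar f (g i) := Dgen_sum _ s g

lemma Ebar_C (f : SF) (g : SF) : Ebar f (MvPolynomial.C g) = 0 := Dgen_C _ g

lemma Ebar_X (f : SF) (j : ℕ) : Ebar f (X j) = Tf f j := Dgen_X _ j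

lemma Tf_zero (f : SF) : Tf f 0 = MvPolynomial.C f := rfl

lemma Tf_succ (f : SF) (j : ℕ) : Tf f (j+1) = eneg1 (Tf f j) := by
  rw [Tf, Function.iterate_succ_apply', Tf]

-- ---------- constant-coefficient polynomials ----------

def Cst (p : RR) : Prop := ∃ q : MvPolynomial ℕ ℝ, constLift q = p

lemma Cst_X (j : ℕ) : Cst (X j : RR) := ⟨X j, by rw [constLift, map_X]⟩

lemma Cst_C (r : ℝ) : Cst (Cc r) := by
  refine ⟨MvPolynomial.C r, ?_⟩
  rw [constLift, map_C, Cc]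
  rfl

lemma Cst.add {p q : RR} (hp : Cst p) (hq : Cst q) : Cst (p + q) := by
  obtain ⟨a, ha⟩ := hp; obtain ⟨b, hb⟩ := hq
  exact ⟨a + b, by rw [map_add, ha, hb]⟩

lemma Cst.mul {p q : RR} (hp : Cst p) (hq : Cst q) : Cst (p * q) := by
  obtain ⟨a, ha⟩ := hp; obtain ⟨b, hb⟩ := hq
  exact ⟨a * b, by rw [map_mul, ha, hb]⟩

lemma Cst.neg {p : RR} (hp : Cst p) : Cst (-p) := by
  obtain ⟨a, ha⟩ := hp
  exact ⟨-a, by rw [map_neg, ha]⟩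

lemma Cst.sub {p q : RR} (hp : Cst p) (hq : Cst q) : Cst (p - q) := by
  rw [sub_eq_add_neg]; exact hp.add hq.neg

lemma Cst.pow {p : RR} (hp : Cst p) (n : ℕ) : Cst (p ^ n) := by
  induction n with
  | zero => exact ⟨1, by rw [map_one, pow_zero]⟩
  | succ n ih => rw [pow_succ]; exact ih.mul hp

lemma Cst_zero : Cst (0 : RR) := ⟨0, map_zero _⟩

lemma Cst_ofNat (n : ℕ) [n.AtLeastTwo] : Cst (OfNat.ofNat n : RR) :=
  ⟨OfNat.ofNat n, map_ofNat _ n⟩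

lemma Cst_sum {ι : Type*} {s : Finset ι} {g : ι → RR} (h : ∀ i ∈ s, Cst (g i)) :
    Cst (∑ i ∈ s, g i) := by
  classical
  induction s using Finset.cons_induction with
  | empty => simpa using Cst_zero
  | cons a s ha ih =>
      rw [Finset.sum_cons]
      exact (h a (Finset.mem_cons_self a s)).add (ih fun i hi => h i (Finset.mem_cons_of_mem hi))

lemma Cst.pderiv {p : RR} (hp : Cst p) (i : ℕ) : Cst (MvPolynomial.pderiv i p) := by
  obtain ⟨a, ha⟩ := hp
  exact ⟨MvPolynomial.pderiv i a, by rw [constLift, ← ha, constLift, pderiv_map]⟩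

lemma Cst.sm {p : RR} (hp : Cst p) : Sm p := by
  obtain ⟨a, ha⟩ := hp
  intro m
  rw [← ha, constLift, coeff_map]
  exact contDiff_const

lemma Cst.du_eq_zero {p : RR} (hp : Cst p) : du p = 0 := by
  obtain ⟨a, ha⟩ := hp
  apply MvPolynomial.ext
  intro m
  rw [coeff_du, coeff_zero, ← ha, constLift, coeff_map]
  exact funext fun x => deriv_const x _

lemma Cst.eneg1 {p : RR} (hp : Cst p) : Cst (eneg1 p) := by
  rw [eneg1_def, hp.du_eq_zero, mul_zero, zero_add, Dgen]
  exact Cst_sum fun i _ => (Cst_X (i+1)).mul (hp.pderiv i)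

-- ---------- vars bounds ----------

lemma vars_monomial_subset {m : ℕ →₀ ℕ} {g : SF} : (monomial m g).vars ⊆ m.support := by
  by_cases h : g = 0
  · simp [h]
  · rw [vars_monomial h]

lemma vars_du_subset (p : RR) : (du p).vars ⊆ p.vars := by
  rw [du]
  refine (vars_sum_subset _ _).trans ?_
  intro i hi
  rw [Finset.mem_biUnion] at hi
  obtain ⟨m, hm, hi⟩ := hi
  have := vars_monomial_subset hi
  exact (mem_vars i).mpr ⟨m, hm, this⟩

lemma vars_pderiv_subset (p : RR) (j : ℕ) : (MvPolynomial.pderiv j p).vars ⊆ p.vars := by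
  classical
  conv_lhs => rw [as_sum p]
  rw [map_sum]
  refine (vars_sum_subset _ _).trans ?_
  intro i hi
  rw [Finset.mem_biUnion] at hi
  obtain ⟨m, hm, hi⟩ := hi
  rw [pderiv_monomial] at hi
  have h2 := vars_monomial_subset hi
  have h3 : (m - Finsupp.single j 1).support ⊆ m.support := by
    intro k hk
    rw [Finsupp.mem_support_iff] at hk ⊢
    intro hc
    apply hk
    rw [Finsupp.tsub_apply, hc]
    exact Nat.zero_sub _
  exact (mem_vars i).mpr ⟨m, hm, h3 h2⟩

lemma vars_eneg1_range {p : RR} {n : ℕ} (h : p.vars ⊆ Finset.range n) :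
    (eneg1 p).vars ⊆ Finset.range (n+1) := by
  rw [eneg1_def, Dgen]
  refine (vars_add_subset _ _).trans ?_
  intro i hi
  rw [Finset.mem_union] at hi
  rw [Finset.mem_range]
  rcases hi with hi | hi
  · have := vars_mul (X 0) (du p) hi
    rw [Finset.mem_union] at this
    rcases this with h1 | h1
    · rw [vars_X] at h1
      rw [Finset.mem_singleton] at h1
      omega
    · have := Finset.mem_range.mp (h (vars_du_subset p h1))
      omega
  · have := vars_sum_subset p.vars (fun i => (X (i+1) : RR) * MvPolynomial.pderiv i p) hi
    rw [Finset.mem_biUnion] at this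
    obtain ⟨j, hj, hij⟩ := this
    have hjn : j < n := Finset.mem_range.mp (h hj)
    have := vars_mul _ _ hij
    rw [Finset.mem_union] at this
    rcases this with h1 | h1
    · rw [vars_X] at h1
      rw [Finset.mem_singleton] at h1
      omega
    · have := Finset.mem_range.mp (h (vars_pderiv_subset p j h1))
      omega

lemma vars_Tf {f : SF} (j : ℕ) : (Tf f j).vars ⊆ Finset.range j := by
  induction j with
  | zero => rw [Tf_zero, vars_C]; exact Finset.empty_subset _
  | succ j ih => rw [Tf_succ]; exact vars_eneg1_range ih

lemma Sm.eneg1 {p : RR} (hp : Sm p) : Sm (_root_.eneg1 p) := by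
  rw [eneg1_def, Dgen]
  exact (((Cst_X 0).sm).mul hp.du).add
    (Sm_sum fun i _ => ((Cst_X (i+1)).sm).mul (hp.pderiv i))

lemma Sm_Tf {f : SF} (hf : ContDiff ℝ ∞ f) (j : ℕ) : Sm (Tf f j) := by
  induction j with
  | zero => exact Sm_C hf
  | succ j ih => rw [Tf_succ]; exact ih.eneg1

-- ---------- pderiv commutes ----------

lemma pderiv_comm (i j : ℕ) (p : RR) :
    MvPolynomial.pderiv i (MvPolynomial.pderiv j p)
      = MvPolynomial.pderiv j (MvPolynomial.pderiv i p) := by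
  classical
  induction p using MvPolynomial.induction_on with
  | C a => simp
  | add p q hp hq => simp [map_add, hp, hq]
  | mul_X p k hp =>
      simp only [pderiv_mul, map_add, pderiv_mul, hp]
      have hik : MvPolynomial.pderiv i (X k : RR) = if i = k then 1 else 0 := by
        rw [pderiv_X, Pi.single_apply]
        simp [eq_comm]
      have hjk : MvPolynomial.pderiv j (X k : RR) = if j = k then 1 else 0 := by
        rw [pderiv_X, Pi.single_apply]
        simp [eq_comm]
      rw [hik, hjk]
      split_ifs <;> simp <;> ring

lemma du_sum {ι : Type*} {s : Finset ι} {g : ι → RR} (h : ∀ i ∈ s, Sm (g i)) :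
    du (∑ i ∈ s, g i) = ∑ i ∈ s, du (g i) := by
  classical
  induction s using Finset.cons_induction with
  | empty =>
      simp only [Finset.sum_empty]
      apply MvPolynomial.ext
      intro m
      rw [coeff_du, coeff_zero, deriv_zero_fun]
  | cons a s ha ih =>
      rw [Finset.sum_cons, Finset.sum_cons,
        du_add (h a (Finset.mem_cons_self a s))
          (Sm_sum fun i hi => h i (Finset.mem_cons_of_mem hi)),
        ih fun i hi => h i (Finset.mem_cons_of_mem hi)]

-- ---------- the commutation lemma ----------

lemma Ebar_eneg1_comm {f : SF} (hf : ContDiff ℝ ∞ f) {p : RR} (hp : Cst p) :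
    Ebar f (eneg1 p) = eneg1 (Ebar f p) := by
  classical
  obtain ⟨N, hN⟩ : ∃ N, p.vars ⊆ Finset.range N :=
    ⟨(p.vars.sup id) + 1, fun i hi =>
      Finset.mem_range.mpr (Nat.lt_succ_of_le (Finset.le_sup (f := id) hi))⟩
  set s := Finset.range (N+1) with hs
  have hps : p.vars ⊆ s := hN.trans (Finset.range_subset_range.mpr (Nat.le_succ N))
  have hTs : ∀ j ∈ s, (Tf f j).vars ⊆ s := by
    intro j hj
    exact (vars_Tf j).trans (Finset.range_subset_range.mpr
      (le_of_lt (Finset.mem_range.mp hj)))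
  have hD : eneg1 p = ∑ i ∈ s, X (i+1) * MvPolynomial.pderiv i p := by
    rw [eneg1_def, hp.du_eq_zero, mul_zero, zero_add, Dgen_eq_sum hps]
  have hvD : (eneg1 p).vars ⊆ s := vars_eneg1_range hN
  have hE : Ebar f p = ∑ j ∈ s, Tf f j * MvPolynomial.pderiv j p := by
    rw [Ebar_def, Dgen_eq_sum hps]
  have hvE : (Ebar f p).vars ⊆ s := by
    rw [hE]
    refine (vars_sum_subset _ _).trans ?_
    intro i hi
    rw [Finset.mem_biUnion] at hi
    obtain ⟨j, hj, hij⟩ := hi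
    have h2 := vars_mul _ _ hij
    rw [Finset.mem_union] at h2
    rcases h2 with h1 | h1
    · exact hTs j hj h1
    · exact hps (vars_pderiv_subset p j h1)
  have pdX : ∀ i j : ℕ, MvPolynomial.pderiv j (X (i+1) : RR) = if j = i+1 then 1 else 0 := by
    intro i j
    rw [pderiv_X, Pi.single_apply]
    simp [eq_comm]
  have L1 : Ebar f (eneg1 p) = ∑ j ∈ s, ∑ i ∈ s,
      (Tf f j * (MvPolynomial.pderiv j (X (i+1) : RR) * MvPolynomial.pderiv i p)
        + Tf f j * (X (i+1) * MvPolynomial.pderiv j (MvPolynomial.pderiv i p))) := by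
    rw [Ebar_def, Dgen_eq_sum hvD]
    apply Finset.sum_congr rfl
    intro j _
    rw [hD, map_sum, Finset.mul_sum]
    apply Finset.sum_congr rfl
    intro i _
    rw [pderiv_mul, mul_add]
  have R1 : eneg1 (Ebar f p) = (∑ j ∈ s, X 0 * (du (Tf f j) * MvPolynomial.pderiv j p))
      + ∑ i ∈ s, ∑ j ∈ s,
        (X (i+1) * (MvPolynomial.pderiv i (Tf f j) * MvPolynomial.pderiv j p)
          + X (i+1) * (Tf f j * MvPolynomial.pderiv i (MvPolynomial.pderiv j p))) := by
    rw [eneg1_def, Dgen_eq_sum hvE]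
    congr 1
    · rw [hE, du_sum (fun j _ => (Sm_Tf hf j).mul ((hp.pderiv j).sm)), Finset.mul_sum]
      apply Finset.sum_congr rfl
      intro j _
      rw [du_mul (Sm_Tf hf j) ((hp.pderiv j).sm), (hp.pderiv j).du_eq_zero, mul_zero, add_zero]
    · apply Finset.sum_congr rfl
      intro i _
      rw [hE, map_sum, Finset.mul_sum]
      apply Finset.sum_congr rfl
      intro j _
      rw [pderiv_mul, mul_add]
  rw [L1, R1]
  simp only [Finset.sum_add_distrib]
  have hbe : (∑ j ∈ s, ∑ i ∈ s, Tf f j * (X (i+1) * MvPolynomial.pderiv j (MvPolynomial.pderiv i p)))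
      = ∑ i ∈ s, ∑ j ∈ s, X (i+1) * (Tf f j * MvPolynomial.pderiv i (MvPolynomial.pderiv j p)) := by
    rw [Finset.sum_comm]
    apply Finset.sum_congr rfl
    intro i _
    apply Finset.sum_congr rfl
    intro j _
    rw [pderiv_comm]
    ring
  rw [hbe]
  have hd2 : (∑ i ∈ s, ∑ j ∈ s, X (i+1) * (MvPolynomial.pderiv i (Tf f j) * MvPolynomial.pderiv j p))
      = ∑ j ∈ s, ∑ i ∈ s, X (i+1) * (MvPolynomial.pderiv i (Tf f j) * MvPolynomial.pderiv j p) :=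
    Finset.sum_comm
  rw [hd2]
  have hL : (∑ j ∈ s, ∑ i ∈ s, Tf f j * (MvPolynomial.pderiv j (X (i+1) : RR) * MvPolynomial.pderiv i p))
      = ∑ i ∈ s, (if i+1 ∈ s then Tf f (i+1) * MvPolynomial.pderiv i p else 0) := by
    rw [Finset.sum_comm]
    apply Finset.sum_congr rfl
    intro i _
    have h1 : ∀ j ∈ s, Tf f j * (MvPolynomial.pderiv j (X (i+1) : RR) * MvPolynomial.pderiv i p)
        = if j = i+1 then Tf f j * MvPolynomial.pderiv i p else 0 := by
      intro j _
      rw [pdX]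
      split_ifs
      · ring
      · ring
    rw [Finset.sum_congr rfl h1,
      Finset.sum_ite_eq' s (i+1) (fun j => Tf f j * MvPolynomial.pderiv i p)]
  have hL2 : (∑ i ∈ s, (if i+1 ∈ s then Tf f (i+1) * MvPolynomial.pderiv i p else 0))
      = ∑ j ∈ s, Tf f (j+1) * MvPolynomial.pderiv j p := by
    apply Finset.sum_congr rfl
    intro i _
    by_cases h : i+1 ∈ s
    · rw [if_pos h]
    · rw [if_neg h]
      have hv : i ∉ p.vars := by
        intro hv
        exact h (Finset.mem_range.mpr (Nat.succ_lt_succ (Finset.mem_range.mp (hN hv))))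
      rw [pderiv_eq_zero_of_notMem_vars hv, mul_zero]
  have hR : (∑ j ∈ s, X 0 * (du (Tf f j) * MvPolynomial.pderiv j p))
      + (∑ j ∈ s, ∑ i ∈ s, X (i+1) * (MvPolynomial.pderiv i (Tf f j) * MvPolynomial.pderiv j p))
      = ∑ j ∈ s, Tf f (j+1) * MvPolynomial.pderiv j p := by
    rw [← Finset.sum_add_distrib]
    apply Finset.sum_congr rfl
    intro j hj
    have h2 : Tf f (j+1) = X 0 * du (Tf f j) + ∑ i ∈ s, X (i+1) * MvPolynomial.pderiv i (Tf f j) := by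
      rw [Tf_succ, eneg1_def, Dgen_eq_sum (hTs j hj)]
    rw [h2, add_mul, Finset.sum_mul]
    congr 1
    · ring
    · apply Finset.sum_congr rfl
      intro i _
      ring
  linear_combination (hL.trans hL2).trans hR.symm

-- ---------- more helpers ----------

lemma eneg1_sum {ι : Type*} {s : Finset ι} {g : ι → RR} (h : ∀ i ∈ s, Sm (g i)) :
    eneg1 (∑ i ∈ s, g i) = ∑ i ∈ s, eneg1 (g i) := by
  rw [eneg1_def, du_sum h, Dgen_sum, Finset.mul_sum, ← Finset.sum_add_distrib]
  exact Finset.sum_congr rfl fun i _ => (eneg1_def (g i)).symm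

lemma eneg1_two_mul {p : RR} (hp : Sm p) : eneg1 (2 * p) = 2 * eneg1 p := by
  rw [two_mul, eneg1_add hp hp, two_mul]

lemma Ebar_two_mul (f : SF) (p : RR) : Ebar f (2 * p) = 2 * Ebar f p := by
  rw [two_mul, Ebar_add, two_mul]

lemma eneg1_Cc (r : ℝ) : eneg1 (Cc r) = 0 := by
  rw [Cc, eneg1_C]
  have : deriv (fun _ : ℝ => r) = (0 : SF) := funext fun x => deriv_const x r
  rw [this, map_zero, mul_zero]

lemma Cc_mul_Cc (a b : ℝ) : Cc a * Cc b = Cc (a * b) := by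
  rw [Cc, Cc, Cc, ← C_mul]
  rfl

lemma Cc_ofNat (n : ℕ) [n.AtLeastTwo] : (OfNat.ofNat n : RR) = Cc (OfNat.ofNat n) := by
  rw [Cc]
  rw [show (fun _ : ℝ => (OfNat.ofNat n : ℝ)) = (OfNat.ofNat n : SF) from rfl]
  exact (map_ofNat MvPolynomial.C n).symm

lemma Cc_half (β : ℝ) : Cc (β/2) = 2 * Cc (β/4) := by
  rw [Cc_ofNat, Cc_mul_Cc]
  congr 1
  ring

lemma Cc_four (β : ℝ) : Cc β = 4 * Cc (β/4) := by
  rw [Cc_ofNat, Cc_mul_Cc]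
  congr 1
  ring

lemma tele (a : ℕ → RR) : ∀ l : ℕ, 1 ≤ l →
    ∑ j ∈ Finset.Icc 1 (l-1), (a j - a (j+1)) = a 1 - a l := by
  intro l hl
  induction l, hl using Nat.le_induction with
  | base => simp
  | succ l hl ih =>
      have h1 : l + 1 - 1 = l := rfl
      rw [h1]
      have h2 : ∃ k, l = k + 1 ∨ l = 0 := ⟨l - 1, by omega⟩
      rcases Nat.eq_zero_or_pos l with h0 | hpos
      · subst h0
        simp
      · obtain ⟨k, rfl⟩ : ∃ k, l = k + 1 := ⟨l - 1, by omega⟩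
        rw [Finset.sum_Icc_succ_top (by omega : 1 ≤ k + 1)]
        have h3 : k + 1 - 1 = k := rfl
        rw [h3] at ih
        rw [ih]
        ring

lemma Ebar_Cc (f : SF) (r : ℝ) : Ebar f (Cc r) = 0 := by
  rw [Cc]; exact Ebar_C f _


/-- Lemma 9.2 (the Pinkall–Sterling recursion): with f'' = β·f, β ≠ 0, and
sequences P, φ, θ satisfying the recursive definitions
P¹ = u₀, θ^{l,m} = P^l·P^{m+1} - e₋₁(P^l)·e₋₁(P^m) + (β/4)·φ^l·φ^m,
φ^{2l-1} = (P^l)² + 2Σ_{j=1}^{l-1} θ^{j,2l-1-j},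
φ^{2l} = P^{l+1}·P^l + θ^{l,l} + 2Σ_{j=1}^{l-1} θ^{j,2l-j},
P^{i+1} = e₋₁e₋₁P^i - (β/2)·u₀·φ^i,
one has e₋₁(φ^i) = 2u₀·e₋₁(P^i), e_{-̄1}(φ^i) = -2f·P^i and
e_{-̄1}e₋₁P^i = -f'·P^i for all i ≥ 1 (so P^i ∈ V_{2i+1}).
Here e_{-̄1} acts on polynomials in the u_j as -Σ_j T^j·∂/∂u_j, i.e. as -Ebar f. -/
theorem stmt15 (β : ℝ) (hβ : β ≠ 0) (f : SF) (hf : ContDiff ℝ (⊤ : ℕ∞) f)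
    (hfode : ∀ t, deriv (deriv f) t = β * f t)
    (P φ : ℕ → RR) (θ : ℕ → ℕ → RR)
    (hP1 : P 1 = X 0)
    (hθ : ∀ l m, θ l m
      = P l * P (m + 1) - eneg1 (P l) * eneg1 (P m) + Cc (β / 4) * (φ l * φ m))
    (hφodd : ∀ l, 1 ≤ l → φ (2 * l - 1)
      = (P l) ^ 2 + 2 * ∑ j ∈ Finset.Icc 1 (l - 1), θ j (2 * l - 1 - j))
    (hφeven : ∀ l, 1 ≤ l → φ (2 * l)
      = P (l + 1) * P l + θ l l + 2 * ∑ j ∈ Finset.Icc 1 (l - 1), θ j (2 * l - j))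
    (hPrec : ∀ i, 1 ≤ i → P (i + 1) = eneg1 (eneg1 (P i)) - Cc (β / 2) * (X 0 * φ i)) :
    ∀ i, 1 ≤ i →
      eneg1 (φ i) = 2 * (X 0 * eneg1 (P i))
      ∧ -Ebar f (φ i) = -(2 * (MvPolynomial.C f * P i))
      ∧ -Ebar f (eneg1 (P i)) = -(MvPolynomial.C (deriv f) * P i) := by
  have hf8 : ContDiff ℝ ∞ f := hf.of_le (by simp)
  have hf' : ContDiff ℝ ∞ (deriv f) := (contDiff_infty_iff_deriv.mp hf8).2
  have hC2 : Cc (β/2) = 2 * Cc (β/4) := Cc_half β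
  have hC4 : Cc β = 4 * Cc (β/4) := Cc_four β
  have hfC : MvPolynomial.C (deriv (deriv f)) = Cc β * MvPolynomial.C f := by
    rw [Cc, ← C_mul]
    congr 1
    funext t
    exact hfode t
  have parity : ∀ n : ℕ, 1 ≤ n → (∃ l, 1 ≤ l ∧ n = 2*l-1) ∨ (∃ l, 1 ≤ l ∧ n = 2*l) := by
    intro n hn
    rcases Nat.even_or_odd n with ⟨l, h⟩ | ⟨l, h⟩
    · right; exact ⟨l, by omega, by omega⟩
    · left; exact ⟨l+1, by omega, by omega⟩
  -- all P and φ have constant coefficients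
  have hCst : ∀ n, 1 ≤ n → Cst (P n) ∧ Cst (φ n) := by
    intro n
    induction n using Nat.strong_induction_on with
    | _ n IH =>
    intro hn
    have hCP : ∀ j, 1 ≤ j → j ≤ n → Cst (P j) := by
      intro j h1 h2
      rcases Nat.lt_or_ge j 2 with h | h
      · have hj1 : j = 1 := by omega
        subst hj1
        rw [hP1]
        exact Cst_X 0
      · obtain ⟨k, rfl⟩ : ∃ k, j = k+1 := ⟨j-1, by omega⟩
        have hk1 : 1 ≤ k := by omega
        have hh := IH k (by omega) hk1
        rw [hPrec k hk1]
        exact (hh.1.eneg1.eneg1).sub ((Cst_C _).mul ((Cst_X 0).mul hh.2))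
    refine ⟨hCP n hn le_rfl, ?_⟩
    have hCθ : ∀ l m, 1 ≤ l → l < n → 1 ≤ m → m < n → m + 1 ≤ n → Cst (θ l m) := by
      intro l m hl hln hm hmn hm1
      rw [hθ]
      exact (((hCP l hl (by omega)).mul (hCP (m+1) (by omega) hm1)).sub
        (((hCP l hl (by omega)).eneg1).mul ((hCP m hm (by omega)).eneg1))).add
        ((Cst_C _).mul (((IH l hln hl).2).mul ((IH m hmn hm).2)))
    rcases parity n hn with ⟨l, hl, rfl⟩ | ⟨l, hl, rfl⟩
    · rw [hφodd l hl]
      refine ((hCP l (by omega) (by omega)).pow 2).add ((Cst_ofNat 2).mul (Cst_sum ?_))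
      intro j hj
      rw [Finset.mem_Icc] at hj
      exact hCθ j (2*l-1-j) (by omega) (by omega) (by omega) (by omega) (by omega)
    · rw [hφeven l hl]
      refine (((hCP (l+1) (by omega) (by omega)).mul (hCP l (by omega) (by omega))).add
        (hCθ l l (by omega) (by omega) (by omega) (by omega) (by omega))).add
        ((Cst_ofNat 2).mul (Cst_sum ?_))
      intro j hj
      rw [Finset.mem_Icc] at hj
      exact hCθ j (2*l-j) (by omega) (by omega) (by omega) (by omega) (by omega)
  have cP : ∀ j, 1 ≤ j → Cst (P j) := fun j hj => (hCst j hj).1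
  have cφ : ∀ j, 1 ≤ j → Cst (φ j) := fun j hj => (hCst j hj).2
  have cθ : ∀ l m, 1 ≤ l → 1 ≤ m → Cst (θ l m) := by
    intro l m hl hm
    rw [hθ]
    exact (((cP l hl).mul (cP (m+1) (by omega))).sub
      (((cP l hl).eneg1).mul ((cP m hm).eneg1))).add
      ((Cst_C _).mul ((cφ l hl).mul (cφ m hm)))
  have Q1 : Ebar f (P 1) = MvPolynomial.C f := by rw [hP1, Ebar_X, Tf_zero]
  suffices MAIN : ∀ n, 1 ≤ n →
      (eneg1 (φ n) = 2 * (X 0 * eneg1 (P n)))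
      ∧ (Ebar f (φ n) = 2 * (MvPolynomial.C f * P n))
      ∧ (Ebar f (eneg1 (P n)) = MvPolynomial.C (deriv f) * P n)
      ∧ (Ebar f (P (n+1)) = MvPolynomial.C (deriv f) * eneg1 (P n)
          - Cc (β/2) * (MvPolynomial.C f * φ n)) by
    intro i hi
    obtain ⟨hA, hB, hC, _⟩ := MAIN i hi
    exact ⟨hA, by rw [hB], by rw [hC]⟩
  intro n
  induction n using Nat.strong_induction_on with
  | _ n IH =>
  intro hn
  -- derivative of θ under eneg1
  have Dθ : ∀ l m, 1 ≤ l → l < n → 1 ≤ m → m < n →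
      eneg1 (θ l m) = P l * eneg1 (P (m+1)) - P (l+1) * eneg1 (P m) := by
    intro l m hl hln hm hmn
    have sPl := (cP l hl).sm
    have sPm := (cP m hm).sm
    have sPm1 := (cP (m+1) (by omega)).sm
    have sDPl := ((cP l hl).eneg1).sm
    have sDPm := ((cP m hm).eneg1).sm
    have sφl := (cφ l hl).sm
    have sφm := (cφ m hm).sm
    have e1 : eneg1 (θ l m)
        = (eneg1 (P l) * P (m+1) + P l * eneg1 (P (m+1)))
          - (eneg1 (eneg1 (P l)) * eneg1 (P m) + eneg1 (P l) * eneg1 (eneg1 (P m)))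
          + (Cc (β/4) * (eneg1 (φ l) * φ m + φ l * eneg1 (φ m))) := by
      rw [hθ, eneg1_add ((sPl.mul sPm1).sub (sDPl.mul sDPm)) ((Cst_C (β/4)).sm.mul (sφl.mul sφm)),
        eneg1_sub (sPl.mul sPm1) (sDPl.mul sDPm), eneg1_mul sPl sPm1,
        eneg1_mul sDPl sDPm, eneg1_mul (Cst_C (β/4)).sm (sφl.mul sφm), eneg1_Cc,
        eneg1_mul sφl sφm]
      ring
    have h2 : eneg1 (eneg1 (P l)) = P (l+1) + 2 * Cc (β/4) * (X 0 * φ l) := by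
      have h := hPrec l hl
      rw [hC2] at h
      linear_combination -h
    have h3 : eneg1 (eneg1 (P m)) = P (m+1) + 2 * Cc (β/4) * (X 0 * φ m) := by
      have h := hPrec m hm
      rw [hC2] at h
      linear_combination -h
    have h4 := (IH l hln hl).1
    have h5 := (IH m hmn hm).1
    rw [h2, h3, h4, h5] at e1
    linear_combination e1
  -- item A
  have hA : eneg1 (φ n) = 2 * (X 0 * eneg1 (P n)) := by
    rcases parity n hn with ⟨l, hl, hnl⟩ | ⟨l, hl, hnl⟩
    · subst hnl
      have hsum : ∑ j ∈ Finset.Icc 1 (l-1), eneg1 (θ j (2*l-1-j))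
          = P 1 * eneg1 (P (2*l-1)) - P l * eneg1 (P l) := by
        have step : ∀ j ∈ Finset.Icc 1 (l-1), eneg1 (θ j (2*l-1-j))
            = (fun j => P j * eneg1 (P (2*l-j))) j
              - (fun j => P j * eneg1 (P (2*l-j))) (j+1) := by
          intro j hj
          rw [Finset.mem_Icc] at hj
          simp only
          rw [Dθ j (2*l-1-j) (by omega) (by omega) (by omega) (by omega),
            show 2*l-1-j+1 = 2*l-j from by omega,
            show 2*l-1-j = 2*l-(j+1) from by omega]
        rw [Finset.sum_congr rfl step, tele (fun j => P j * eneg1 (P (2*l-j))) l hl,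
          show 2*l-l = l from by omega]
      have e1 : eneg1 (φ (2*l-1))
          = (eneg1 (P l) * P l + P l * eneg1 (P l))
            + 2 * ∑ j ∈ Finset.Icc 1 (l-1), eneg1 (θ j (2*l-1-j)) := by
        rw [hφodd l hl, pow_two,
          eneg1_add ((cP l hl).mul (cP l hl)).sm
            ((Cst_ofNat 2).mul (Cst_sum fun j hj => by
              rw [Finset.mem_Icc] at hj
              exact cθ j (2*l-1-j) (by omega) (by omega))).sm,
          eneg1_mul (cP l hl).sm (cP l hl).sm,
          eneg1_two_mul (Cst_sum fun j hj => by
            rw [Finset.mem_Icc] at hj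
            exact cθ j (2*l-1-j) (by omega) (by omega)).sm,
          eneg1_sum fun j hj => by
            rw [Finset.mem_Icc] at hj
            exact (cθ j (2*l-1-j) (by omega) (by omega)).sm]
      rw [hsum, hP1] at e1
      linear_combination e1
    · subst hnl
      have hsum : ∑ j ∈ Finset.Icc 1 (l-1), eneg1 (θ j (2*l-j))
          = P 1 * eneg1 (P (2*l)) - P l * eneg1 (P (l+1)) := by
        have step : ∀ j ∈ Finset.Icc 1 (l-1), eneg1 (θ j (2*l-j))
            = (fun j => P j * eneg1 (P (2*l+1-j))) j
              - (fun j => P j * eneg1 (P (2*l+1-j))) (j+1) := by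
          intro j hj
          rw [Finset.mem_Icc] at hj
          simp only
          rw [Dθ j (2*l-j) (by omega) (by omega) (by omega) (by omega),
            show 2*l-j+1 = 2*l+1-j from by omega,
            show 2*l-j = 2*l+1-(j+1) from by omega]
        rw [Finset.sum_congr rfl step, tele (fun j => P j * eneg1 (P (2*l+1-j))) l hl,
          show 2*l+1-1 = 2*l from by omega, show 2*l+1-l = l+1 from by omega]
      have e1 : eneg1 (φ (2*l))
          = (eneg1 (P (l+1)) * P l + P (l+1) * eneg1 (P l))
            + eneg1 (θ l l)
            + 2 * ∑ j ∈ Finset.Icc 1 (l-1), eneg1 (θ j (2*l-j)) := by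
        rw [hφeven l hl,
          eneg1_add (((cP (l+1) (by omega)).mul (cP l hl)).add (cθ l l hl hl)).sm
            ((Cst_ofNat 2).mul (Cst_sum fun j hj => by
              rw [Finset.mem_Icc] at hj
              exact cθ j (2*l-j) (by omega) (by omega))).sm,
          eneg1_add ((cP (l+1) (by omega)).mul (cP l hl)).sm (cθ l l hl hl).sm,
          eneg1_mul (cP (l+1) (by omega)).sm (cP l hl).sm,
          eneg1_two_mul (Cst_sum fun j hj => by
            rw [Finset.mem_Icc] at hj
            exact cθ j (2*l-j) (by omega) (by omega)).sm,
          eneg1_sum fun j hj => by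
            rw [Finset.mem_Icc] at hj
            exact (cθ j (2*l-j) (by omega) (by omega)).sm]
      rw [hsum, hP1, Dθ l l hl (by omega) hl (by omega)] at e1
      linear_combination e1
  -- Ebar of θ
  have Eθ : ∀ l m, 1 ≤ l → l < n → 1 ≤ m → m < n →
      Ebar f (θ l m) = Ebar f (P l) * P (m+1) - Ebar f (P (l+1)) * P m := by
    intro l m hl hln hm hmn
    have e1 : Ebar f (θ l m)
        = (Ebar f (P l) * P (m+1) + P l * Ebar f (P (m+1)))
          - (Ebar f (eneg1 (P l)) * eneg1 (P m) + eneg1 (P l) * Ebar f (eneg1 (P m)))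
          + (Cc (β/4) * (Ebar f (φ l) * φ m + φ l * Ebar f (φ m))) := by
      rw [hθ, Ebar_add, Ebar_sub, Ebar_mul, Ebar_mul, Ebar_mul, Ebar_Cc, Ebar_mul]
      ring
    have h2m := (IH m hmn hm).2.2.2
    have h2l := (IH l hln hl).2.2.2
    rw [hC2] at h2m h2l
    have h3 := (IH l hln hl).2.2.1
    have h4 := (IH m hmn hm).2.2.1
    have h5 := (IH l hln hl).2.1
    have h6 := (IH m hmn hm).2.1
    rw [h2m, h3, h4, h5, h6] at e1
    rw [h2l]
    linear_combination e1
  -- item B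
  have hB : Ebar f (φ n) = 2 * (MvPolynomial.C f * P n) := by
    rcases parity n hn with ⟨l, hl, hnl⟩ | ⟨l, hl, hnl⟩
    · subst hnl
      have hsum : ∑ j ∈ Finset.Icc 1 (l-1), Ebar f (θ j (2*l-1-j))
          = Ebar f (P 1) * P (2*l-1) - Ebar f (P l) * P l := by
        have step : ∀ j ∈ Finset.Icc 1 (l-1), Ebar f (θ j (2*l-1-j))
            = (fun j => Ebar f (P j) * P (2*l-j)) j
              - (fun j => Ebar f (P j) * P (2*l-j)) (j+1) := by
          intro j hj
          rw [Finset.mem_Icc] at hj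
          simp only
          rw [Eθ j (2*l-1-j) (by omega) (by omega) (by omega) (by omega),
            show 2*l-1-j+1 = 2*l-j from by omega,
            show 2*l-1-j = 2*l-(j+1) from by omega]
        rw [Finset.sum_congr rfl step, tele (fun j => Ebar f (P j) * P (2*l-j)) l hl,
          show 2*l-l = l from by omega]
      have e1 : Ebar f (φ (2*l-1))
          = (Ebar f (P l) * P l + P l * Ebar f (P l))
            + 2 * ∑ j ∈ Finset.Icc 1 (l-1), Ebar f (θ j (2*l-1-j)) := by
        rw [hφodd l hl, pow_two, Ebar_add, Ebar_mul, Ebar_two_mul, Ebar_sum]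
      rw [hsum, Q1] at e1
      linear_combination e1
    · subst hnl
      have hsum : ∑ j ∈ Finset.Icc 1 (l-1), Ebar f (θ j (2*l-j))
          = Ebar f (P 1) * P (2*l) - Ebar f (P l) * P (l+1) := by
        have step : ∀ j ∈ Finset.Icc 1 (l-1), Ebar f (θ j (2*l-j))
            = (fun j => Ebar f (P j) * P (2*l+1-j)) j
              - (fun j => Ebar f (P j) * P (2*l+1-j)) (j+1) := by
          intro j hj
          rw [Finset.mem_Icc] at hj
          simp only
          rw [Eθ j (2*l-j) (by omega) (by omega) (by omega) (by omega),
            show 2*l-j+1 = 2*l+1-j from by omega,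
            show 2*l-j = 2*l+1-(j+1) from by omega]
        rw [Finset.sum_congr rfl step, tele (fun j => Ebar f (P j) * P (2*l+1-j)) l hl,
          show 2*l+1-1 = 2*l from by omega, show 2*l+1-l = l+1 from by omega]
      have e1 : Ebar f (φ (2*l))
          = (Ebar f (P (l+1)) * P l + P (l+1) * Ebar f (P l))
            + Ebar f (θ l l)
            + 2 * ∑ j ∈ Finset.Icc 1 (l-1), Ebar f (θ j (2*l-j)) := by
        rw [hφeven l hl, Ebar_add, Ebar_add, Ebar_mul, Ebar_two_mul, Ebar_sum]
      rw [hsum, Q1, Eθ l l hl (by omega) hl (by omega)] at e1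
      linear_combination e1
  -- item C
  have hC : Ebar f (eneg1 (P n)) = MvPolynomial.C (deriv f) * P n := by
    rcases Nat.lt_or_ge n 2 with h | h
    · have hn1 : n = 1 := by omega
      subst hn1
      rw [hP1, eneg1_X, Ebar_X, Tf_succ, Tf_zero, eneg1_C]
      ring
    · obtain ⟨k, rfl⟩ : ∃ k, n = k+1 := ⟨n-1, by omega⟩
      have hk : 1 ≤ k := by omega
      have comm := Ebar_eneg1_comm hf8 (cP (k+1) (by omega))
      have hQ := (IH k (by omega) hk).2.2.2
      have ha := (IH k (by omega) hk).1
      rw [comm, hQ]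
      have sDPk := ((cP k hk).eneg1).sm
      have sφk := (cφ k hk).sm
      have e2 : eneg1 (MvPolynomial.C (deriv f) * eneg1 (P k)
            - Cc (β/2) * (MvPolynomial.C f * φ k))
          = ((X 0 * MvPolynomial.C (deriv (deriv f))) * eneg1 (P k)
              + MvPolynomial.C (deriv f) * eneg1 (eneg1 (P k)))
            - Cc (β/2) * ((X 0 * MvPolynomial.C (deriv f)) * φ k
              + MvPolynomial.C f * eneg1 (φ k)) := by
        rw [eneg1_sub ((Sm_C hf').mul sDPk) ((Cst_C _).sm.mul ((Sm_C (hf8)).mul sφk)),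
          eneg1_mul (Sm_C hf') sDPk, eneg1_C,
          eneg1_mul (Cst_C (β/2)).sm ((Sm_C hf8).mul sφk), eneg1_Cc,
          eneg1_mul (Sm_C hf8) sφk, eneg1_C]
        ring
      have hp := hPrec k hk
      rw [hfC, ha] at e2
      rw [e2]
      linear_combination -(MvPolynomial.C (deriv f)) * hp
        + (X 0 * MvPolynomial.C f * eneg1 (P k)) * hC4
        - (2 * X 0 * MvPolynomial.C f * eneg1 (P k)) * hC2
  -- item E
  have hE : Ebar f (P (n+1)) = MvPolynomial.C (deriv f) * eneg1 (P n)
      - Cc (β/2) * (MvPolynomial.C f * φ n) := by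
    rw [hPrec n hn, Ebar_sub, Ebar_mul, Ebar_mul, Ebar_Cc, Ebar_X, Tf_zero,
      Ebar_eneg1_comm hf8 (cP n hn).eneg1, hC, hB,
      eneg1_mul (Sm_C hf') (cP n hn).sm, eneg1_C, hfC]
    linear_combination (X 0 * MvPolynomial.C f * P n) * hC4
      - (2 * X 0 * MvPolynomial.C f * P n) * hC2
  exact ⟨hA, hB, hC, hE⟩
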